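/- Let n ≥ 2 and T ≥ 1 be integers with log n ≤ T, and let ℓ_t ∈ [0,1]^n be loss vectors for t = 1,…,T. With learning rate η = √((log n)/T), the exponential-weights distributions p_t satisfy Σ_{t=1}^T ⟨p_t, ℓ_t⟩ − min_{i ∈ [n]} Σ_{t=1}^T ℓ_t(i) ≤ 2·√(T·log n). -/

import Mathlib

lemma exp_neg_le_quad (x : ℝ) (hx : 0 ≤ x) : Real.exp (-x) ≤ 1 - x + x ^ 2 := by
  have h1 : (0:ℝ) < 1 + x := by linarith
  have h2 : 1 + x ≤ Real.exp x := by linarith [Real.add_one_le_exp x]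
  have h3 : Real.exp (-x) ≤ (1 + x)⁻¹ := by
    rw [Real.exp_neg]
    exact inv_anti₀ h1 h2
  have h5 : (1 + x)⁻¹ * (1 + x) = 1 := inv_mul_cancel₀ h1.ne'
  nlinarith [inv_nonneg.mpr h1.le, pow_nonneg hx 3]

open Finset in
theorem mwu_expected_regret_tuned
    (n T : ℕ) (hn : 2 ≤ n) (hT : 1 ≤ T) (hlog : Real.log n ≤ T)
    (η : ℝ) (hη : η = Real.sqrt (Real.log n / T))
    (ℓ : ℕ → Fin n → ℝ)
    (hℓ : ∀ t ∈ Finset.range T, ∀ i, ℓ t i ∈ Set.Icc (0 : ℝ) 1)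
    (w p : ℕ → Fin n → ℝ)
    (hw0 : ∀ i, w 0 i = 1)
    (hw : ∀ t i, w (t + 1) i = w t i * Real.exp (-η * ℓ t i))
    (hp : ∀ t i, p t i = w t i / ∑ j, w t j) :
    ∑ t ∈ Finset.range T, ∑ i, p t i * ℓ t i -
      Finset.univ.inf' (Finset.univ_nonempty_iff.mpr ⟨⟨0, Nat.lt_of_lt_of_le Nat.zero_lt_two hn⟩⟩)
        (fun i => ∑ t ∈ Finset.range T, ℓ t i)
      ≤ 2 * Real.sqrt (T * Real.log n) := by
  have hne : (Finset.univ : Finset (Fin n)).Nonempty :=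
    Finset.univ_nonempty_iff.mpr ⟨⟨0, Nat.lt_of_lt_of_le Nat.zero_lt_two hn⟩⟩
  have hn1 : (1:ℝ) < n := by exact_mod_cast Nat.lt_of_lt_of_le Nat.one_lt_two hn
  have hln : 0 < Real.log n := Real.log_pos hn1
  have hTpos : (0:ℝ) < T := by exact_mod_cast hT
  have hratio : 0 < Real.log n / T := div_pos hln hTpos
  have hηpos : 0 < η := hη ▸ Real.sqrt_pos.mpr hratio
  have hη2 : η ^ 2 = Real.log n / T := by
    rw [hη]; exact Real.sq_sqrt hratio.le
  have hη2T : η ^ 2 * T = Real.log n := by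
    rw [hη2]; field_simp
  -- closed form for weights
  have hwc : ∀ t i, w t i = Real.exp (-η * ∑ s ∈ Finset.range t, ℓ s i) := by
    intro t
    induction t with
    | zero => intro i; simp [hw0]
    | succ t ih =>
      intro i
      rw [hw t i, ih i, ← Real.exp_add, Finset.sum_range_succ]
      ring_nf
  have hwpos : ∀ t i, 0 < w t i := fun t i => hwc t i ▸ Real.exp_pos _
  set Φ : ℕ → ℝ := fun t => ∑ j, w t j with hΦ
  have hΦpos : ∀ t, 0 < Φ t := fun t => Finset.sum_pos (fun j _ => hwpos t j) hne
  set q : ℕ → ℝ := fun t => ∑ i, p t i * ℓ t i with hq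
  -- per-step potential bound
  have step : ∀ t ∈ Finset.range T,
      Real.log (Φ (t + 1)) ≤ Real.log (Φ t) + (-η * q t + η ^ 2) := by
    intro t ht
    have hpw : ∀ i, p t i * Φ t = w t i := fun i => by
      rw [hp t i]; exact div_mul_cancel₀ _ (hΦpos t).ne'
    have hwq : ∑ i, w t i * ℓ t i = Φ t * q t := by
      rw [hq]
      simp only
      rw [Finset.mul_sum]
      refine Finset.sum_congr rfl fun i _ => ?_
      rw [← hpw i]
      ring
    have h1 : Φ (t + 1) ≤ Φ t * (1 + (-η * q t + η ^ 2)) := by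
      have h2 : Φ (t + 1) ≤ ∑ i, w t i * (1 - η * ℓ t i + η ^ 2) := by
        simp only [hΦ]
        apply Finset.sum_le_sum
        intro i _
        rw [hw t i]
        obtain ⟨hl0, hl1⟩ := hℓ t ht i
        have hx : 0 ≤ η * ℓ t i := mul_nonneg hηpos.le hl0
        have hq1 := exp_neg_le_quad (η * ℓ t i) hx
        have hsq : (η * ℓ t i) ^ 2 ≤ η ^ 2 := by
          nlinarith [mul_nonneg (mul_nonneg (sq_nonneg η) (sub_nonneg.mpr hl1))
            (by linarith : (0:ℝ) ≤ 1 + ℓ t i)]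
        have hb : Real.exp (-η * ℓ t i) ≤ 1 - η * ℓ t i + η ^ 2 := by
          rw [neg_mul]; linarith
        exact mul_le_mul_of_nonneg_left hb (hwpos t i).le
      calc Φ (t + 1) ≤ ∑ i, w t i * (1 - η * ℓ t i + η ^ 2) := h2
        _ = Φ t * (1 + η ^ 2) - η * (∑ i, w t i * ℓ t i) := by
            simp only [hΦ, Finset.sum_mul, Finset.mul_sum, ← Finset.sum_sub_distrib]
            exact Finset.sum_congr rfl fun i _ => by ring
        _ = Φ t * (1 + (-η * q t + η ^ 2)) := by rw [hwq]; ring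
    have h3 : Φ t * (1 + (-η * q t + η ^ 2)) ≤ Φ t * Real.exp (-η * q t + η ^ 2) := by
      apply mul_le_mul_of_nonneg_left _ (hΦpos t).le
      linarith [Real.add_one_le_exp (-η * q t + η ^ 2)]
    calc Real.log (Φ (t + 1)) ≤ Real.log (Φ t * Real.exp (-η * q t + η ^ 2)) :=
          Real.log_le_log (hΦpos (t + 1)) (h1.trans h3)
      _ = Real.log (Φ t) + (-η * q t + η ^ 2) := by
          rw [Real.log_mul (hΦpos t).ne' (Real.exp_pos _).ne', Real.log_exp]
  -- telescoping
  have tele : ∀ t, t ≤ T →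
      Real.log (Φ t) ≤ Real.log (Φ 0) + ∑ s ∈ Finset.range t, (-η * q s + η ^ 2) := by
    intro t
    induction t with
    | zero => intro _; simp
    | succ t ih =>
      intro h
      have ht : t ∈ Finset.range T := Finset.mem_range.mpr (Nat.lt_of_succ_le h)
      have := step t ht
      rw [Finset.sum_range_succ]
      linarith [ih (Nat.le_of_succ_le h)]
  have hΦ0 : Real.log (Φ 0) = Real.log n := by
    simp [hΦ, hw0]
  -- lower bound via best expert
  obtain ⟨i0, -, hi0⟩ := Finset.exists_mem_eq_inf' hne
    (fun i => ∑ t ∈ Finset.range T, ℓ t i)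
  have hlow : -η * (∑ t ∈ Finset.range T, ℓ t i0) ≤ Real.log (Φ T) := by
    rw [← Real.log_exp (-η * ∑ t ∈ Finset.range T, ℓ t i0)]
    apply Real.log_le_log (Real.exp_pos _)
    rw [← hwc T i0]
    simp only [hΦ]
    exact Finset.single_le_sum (fun j _ => (hwpos T j).le) (Finset.mem_univ i0)
  -- combine
  have hsum : ∑ s ∈ Finset.range T, (-η * q s + η ^ 2)
      = -η * (∑ s ∈ Finset.range T, q s) + η ^ 2 * T := by
    rw [Finset.sum_add_distrib, ← Finset.mul_sum, Finset.sum_const, Finset.card_range,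
      nsmul_eq_mul]
    ring
  have key : -η * (∑ t ∈ Finset.range T, ℓ t i0)
      ≤ Real.log n + (-η * (∑ s ∈ Finset.range T, q s) + η ^ 2 * T) := by
    have := tele T le_rfl
    rw [hΦ0, hsum] at this
    linarith
  set Q := ∑ s ∈ Finset.range T, q s with hQ
  set S := ∑ t ∈ Finset.range T, ℓ t i0 with hS
  have hmain : Q - S ≤ 2 * (η * T) := by
    have h9 : η * (Q - S) ≤ η * (2 * (η * T)) := by nlinarith
    exact le_of_mul_le_mul_left h9 hηpos
  have hηT : η * T = Real.sqrt (T * Real.log n) := by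
    have hsq : (η * T) ^ 2 = T * Real.log n := by
      rw [mul_pow, hη2]
      field_simp
    rw [← hsq, Real.sqrt_sq (by positivity)]
  rw [hi0, ← hηT]
  linarith
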